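/- arXiv:1602.08181 — 2 statements merged into one kernel-verified Lean document; each statement's English description precedes it below -/
import Mathlib

section
/- If (X,Y) has joint density proportional to 1/(1+x²+y²)^n on ℝ² for an integer n ≥ 2, then X/Y has the standard Cauchy distribution. -/
open MeasureTheory ProbabilityTheory Real

/-- The standard Cauchy distribution, with density `1 / (π (1 + z²))` on `ℝ`. -/
noncomputable def stdCauchyMeasure : Measure ℝ :=
  volume.withDensity (fun z => ENNReal.ofReal (1 / (π * (1 + z ^ 2))))

/-!
Substituting `x = t y`, the law of `X / Y` has density
`t ↦ ∫ |y| K / (1 + (t y)² + y²)ⁿ dy = K ∫ |y| / (1 + (1 + t²) y²)ⁿ dy`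
`  = K / ((n - 1) (1 + t²))`,
a constant multiple of the Cauchy density. Both laws are probability measures, so the
constant is `1`.
-/

open Set Filter Topology
open scoped ENNReal

theorem stdCauchyMeasure_eq_cauchyMeasure : stdCauchyMeasure = cauchyMeasure 0 1 := by
  rw [cauchyMeasure_of_scale_ne_zero 0 one_ne_zero, stdCauchyMeasure]
  congr 1
  funext z
  rw [cauchyPDF, cauchyPDFReal_def']
  congr 1
  simp only [one_div, mul_inv_rev, inv_one, NNReal.coe_one, mul_one, sub_zero, div_one]
  ring

instance : IsProbabilityMeasure stdCauchyMeasure :=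
  stdCauchyMeasure_eq_cauchyMeasure ▸ inferInstance

theorem withDensity_ofReal_div_one_add_sq (c : ℝ) :
    volume.withDensity (fun t => ENNReal.ofReal (c / (1 + t ^ 2))) =
      ENNReal.ofReal (c * π) • stdCauchyMeasure := by
  rw [stdCauchyMeasure, ← withDensity_smul' _ _ ENNReal.ofReal_ne_top]
  congr 1
  funext t
  rw [Pi.smul_apply, smul_eq_mul, ← ENNReal.ofReal_mul' (by positivity)]
  congr 1
  field_simp

theorem smul_eq_self_of_isProbabilityMeasure {α : Type*} [MeasurableSpace α] {P : Measure α}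
    [IsProbabilityMeasure P] {c : ℝ≥0∞} [IsProbabilityMeasure (c • P)] : c • P = P := by
  have hc : (c • P) univ = 1 := measure_univ
  rw [Measure.smul_apply, measure_univ, smul_eq_mul, mul_one] at hc
  rw [hc, one_smul]

theorem lintegral_comp_mul_right {a : ℝ} (ha : a ≠ 0) (g : ℝ → ℝ≥0∞) :
    ∫⁻ x, g x = ENNReal.ofReal |a| * ∫⁻ t, g (t * a) := by
  conv_lhs => rw [← Real.smul_map_volume_mul_right ha]
  rw [lintegral_smul_measure]
  congr 1
  exact lintegral_map_equiv g (Homeomorph.mulRight₀ a ha).toMeasurableEquiv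

theorem lintegral_comp_abs (f : ℝ → ℝ≥0∞) :
    ∫⁻ x, f |x| = 2 * ∫⁻ x in Ioi 0, f x := by
  have hIoi : ∫⁻ x in Ioi 0, f |x| = ∫⁻ x in Ioi 0, f x :=
    setLIntegral_congr_fun measurableSet_Ioi fun x hx => by rw [abs_of_pos hx]
  have hIic : ∫⁻ x in Iic 0, f |x| = ∫⁻ x in Ioi 0, f x := by
    have := (Measure.measurePreserving_neg (volume : Measure ℝ)).setLIntegral_comp_preimage_emb
      (Homeomorph.neg ℝ).measurableEmbedding (fun x => f |x|) (Ici 0)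
    simp only [abs_neg, neg_preimage, neg_Ici, neg_zero] at this
    rw [this, setLIntegral_congr Ioi_ae_eq_Ici.symm, hIoi]
  rw [← lintegral_add_compl _ measurableSet_Ioi, compl_Ioi, hIic, hIoi, two_mul]

theorem map_fst_div_snd_withDensity {f : ℝ × ℝ → ℝ≥0∞} (hf : Measurable f) :
    ((volume : Measure (ℝ × ℝ)).withDensity f).map (fun p => p.1 / p.2) =
      volume.withDensity (fun t => ∫⁻ y, ENNReal.ofReal |y| * f (t * y, y)) := by
  have hdiv : Measurable fun p : ℝ × ℝ => p.1 / p.2 := by fun_prop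
  ext s hs
  have hinner : ∀ y : ℝ, y ≠ 0 →
      ∫⁻ x, ((fun p : ℝ × ℝ => p.1 / p.2) ⁻¹' s).indicator f (x, y) =
        ∫⁻ t in s, ENNReal.ofReal |y| * f (t * y, y) := by
    intro y hy
    rw [lintegral_comp_mul_right hy, ← lintegral_indicator hs,
      ← lintegral_const_mul' _ _ ENNReal.ofReal_ne_top]
    congr 1
    funext t
    by_cases ht : t ∈ s <;> simp [ht, mul_div_cancel_right₀ _ hy]
  calc ((volume : Measure (ℝ × ℝ)).withDensity f).map (fun p => p.1 / p.2) s
      = ∫⁻ y, ∫⁻ x, ((fun p : ℝ × ℝ => p.1 / p.2) ⁻¹' s).indicator f (x, y) := by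
        rw [Measure.map_apply hdiv hs, withDensity_apply _ (hdiv hs),
          ← lintegral_indicator (hdiv hs), Measure.volume_eq_prod,
          lintegral_prod_symm _ (hf.indicator (hdiv hs)).aemeasurable]
    _ = ∫⁻ y, ∫⁻ t in s, ENNReal.ofReal |y| * f (t * y, y) := by
        refine lintegral_congr_ae ?_
        filter_upwards [Measure.ae_ne volume 0] with y hy using hinner y hy
    _ = volume.withDensity (fun t => ∫⁻ y, ENNReal.ofReal |y| * f (t * y, y)) s := by
        rw [withDensity_apply _ hs, lintegral_lintegral_swap (by fun_prop)]

theorem hasDerivAt_inv_one_add_mul_sq_pow {c y : ℝ} (hy : 1 + c * y ^ 2 ≠ 0) (m : ℕ) :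
    HasDerivAt (fun y => ((1 + c * y ^ 2) ^ m)⁻¹)
      (-(2 * c * m * y / (1 + c * y ^ 2) ^ (m + 1))) y := by
  have hbase : HasDerivAt (fun y => 1 + c * y ^ 2) (2 * c * y) y := by
    simpa [mul_comm, mul_left_comm] using ((hasDerivAt_pow 2 y).const_mul c).const_add 1
  refine ((hbase.fun_pow m).fun_inv (pow_ne_zero m hy)).congr_deriv ?_
  rcases m with _ | m
  · simp
  · rw [Nat.add_sub_cancel]
    field_simp
    ring

theorem lintegral_Ioi_div_one_add_mul_sq_pow {c : ℝ} (hc : 0 < c) {n : ℕ} (hn : 1 < n) :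
    ∫⁻ y in Ioi 0, ENNReal.ofReal (y / (1 + c * y ^ 2) ^ n) =
      ENNReal.ofReal (1 / (2 * c * (n - 1))) := by
  obtain ⟨m, rfl⟩ : ∃ m, n = m + 1 := ⟨n - 1, by omega⟩
  have hm : (0 : ℝ) < m := by exact_mod_cast Nat.lt_of_succ_lt_succ hn
  set F : ℝ → ℝ := fun y => -(2 * c * m)⁻¹ * ((1 + c * y ^ 2) ^ m)⁻¹
  have hF : ∀ y ∈ Ici (0 : ℝ), HasDerivAt F (y / (1 + c * y ^ 2) ^ (m + 1)) y := fun y _ =>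
    ((hasDerivAt_inv_one_add_mul_sq_pow (by positivity) m).const_mul _).congr_deriv
      (by field_simp)
  have hpos : ∀ y ∈ Ioi (0 : ℝ), 0 ≤ y / (1 + c * y ^ 2) ^ (m + 1) :=
    fun y (hy : 0 < y) => by positivity
  have hlim : Tendsto F atTop (𝓝 0) := by
    have hbase : Tendsto (fun y : ℝ => 1 + c * y ^ 2) atTop atTop :=
      tendsto_atTop_add_const_left _ 1 ((tendsto_pow_atTop two_ne_zero).const_mul_atTop hc)
    rw [← mul_zero (-(2 * c * m)⁻¹)]
    exact ((tendsto_pow_atTop (by omega)).comp hbase).inv_tendsto_atTop.const_mul _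
  rw [← ofReal_integral_eq_lintegral_ofReal (integrableOn_Ioi_deriv_of_nonneg' hF hpos hlim)
    ((ae_restrict_iff' measurableSet_Ioi).2 (ae_of_all _ hpos)),
    integral_Ioi_of_hasDerivAt_of_nonneg' hF hpos hlim]
  congr 1
  simp [F]

theorem lintegral_abs_div_one_add_mul_sq_pow {c : ℝ} (hc : 0 < c) {n : ℕ} (hn : 1 < n) :
    ∫⁻ y, ENNReal.ofReal (|y| / (1 + c * y ^ 2) ^ n) = ENNReal.ofReal (1 / (c * (n - 1))) := by
  have hn' : (0 : ℝ) < n - 1 := by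
    rw [sub_pos]; exact_mod_cast hn
  have h := lintegral_comp_abs (fun y => ENNReal.ofReal (y / (1 + c * y ^ 2) ^ n))
  simp only [sq_abs] at h
  rw [h, lintegral_Ioi_div_one_add_mul_sq_pow hc hn, ← ENNReal.ofReal_ofNat 2,
    ← ENNReal.ofReal_mul zero_le_two]
  congr 1
  field_simp

theorem lintegral_abs_mul_ofReal_div_one_add_sq_add_sq_pow (K t : ℝ) {n : ℕ} (hn : 1 < n) :
    ∫⁻ y, ENNReal.ofReal |y| * ENNReal.ofReal (K / (1 + (t * y) ^ 2 + y ^ 2) ^ n) =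
      ENNReal.ofReal (K / (n - 1) / (1 + t ^ 2)) := by
  have hn' : (0 : ℝ) < n - 1 := by
    rw [sub_pos]; exact_mod_cast hn
  have hpt : ∀ y : ℝ, ENNReal.ofReal |y| * ENNReal.ofReal (K / (1 + (t * y) ^ 2 + y ^ 2) ^ n) =
      ENNReal.ofReal K * ENNReal.ofReal (|y| / (1 + (1 + t ^ 2) * y ^ 2) ^ n) := fun y => by
    rw [← ENNReal.ofReal_mul (abs_nonneg y), ← ENNReal.ofReal_mul' (by positivity)]
    congr 1
    ring
  simp_rw [hpt]
  rw [lintegral_const_mul' _ _ ENNReal.ofReal_ne_top,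
    lintegral_abs_div_one_add_mul_sq_pow (by positivity) hn,
    ← ENNReal.ofReal_mul' (by positivity)]
  congr 1
  field_simp

theorem ratio_poly_density_cauchy_general {Ω : Type*} [MeasurableSpace Ω] (μ : Measure Ω)
    [IsProbabilityMeasure μ] (X Y : Ω → ℝ) (hX : Measurable X) (hY : Measurable Y)
    (n : ℕ) (hn : 2 ≤ n) (K : ℝ)
    (hlaw : μ.map (fun ω => (X ω, Y ω)) =
      (volume : Measure (ℝ × ℝ)).withDensity
        (fun p => ENNReal.ofReal (K / (1 + p.1 ^ 2 + p.2 ^ 2) ^ n))) :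
    μ.map (fun ω => X ω / Y ω) = stdCauchyMeasure := by
  have hratio : μ.map (fun ω => X ω / Y ω) =
      (μ.map fun ω => (X ω, Y ω)).map fun p => p.1 / p.2 := by
    rw [Measure.map_map (by fun_prop) (by fun_prop)]
    rfl
  have hcauchy :
      μ.map (fun ω => X ω / Y ω) = ENNReal.ofReal (K / (n - 1) * π) • stdCauchyMeasure := by
    rw [hratio, hlaw, map_fst_div_snd_withDensity (by fun_prop)]
    simp_rw [lintegral_abs_mul_ofReal_div_one_add_sq_add_sq_pow K _ hn]
    exact withDensity_ofReal_div_one_add_sq _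
  have : IsProbabilityMeasure (ENNReal.ofReal (K / (n - 1) * π) • stdCauchyMeasure) :=
    hcauchy ▸ Measure.isProbabilityMeasure_map (by fun_prop)
  rw [hcauchy, smul_eq_self_of_isProbabilityMeasure]

theorem ratio_poly_density_cauchy {Ω : Type*} [MeasurableSpace Ω] (μ : Measure Ω)
    [IsProbabilityMeasure μ] (X Y : Ω → ℝ) (hX : Measurable X) (hY : Measurable Y)
    (n : ℕ) (hn : 2 ≤ n) (K : ℝ) (hK : 0 < K)
    (hlaw : μ.map (fun ω => (X ω, Y ω)) =
      (volume : Measure (ℝ × ℝ)).withDensity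
        (fun p => ENNReal.ofReal (K / (1 + p.1 ^ 2 + p.2 ^ 2) ^ n))) :
    μ.map (fun ω => X ω / Y ω) = stdCauchyMeasure :=
  ratio_poly_density_cauchy_general μ X Y hX hY n hn K hlaw
end

section
/- Let Θ ~ Unif(-π, π] and u ∈ ℝ fixed, w ∈ [0,1]. Then w·tan(Θ) + (1-w)·tan(Θ + u) has the standard Cauchy distribution. -/
/-!
`F θ = w tan θ + (1 - w) tan (θ + u)` is `π`-periodic, so it suffices to show that `{F ≤ x}` has
measure `arctan x + π / 2` in one period. If `0 < w < 1` and `0 < u < π`, the poles `π/2 - u` and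
`π/2` cut the period `(π/2 - u, 3π/2 - u]` into two branches on each of which `F` increases from
`-∞` to `∞`, so `{F ≤ x}` consists of two intervals ending at the roots `θ₁ < θ₂` of `F = x`.
Clearing denominators, `F θ = tan a` becomes `sin (2θ + u - a) = c` with `c` independent of `θ`,
which forces `θ₁ + θ₂ = a + 3π/2 - u`; with `a = arctan x` the two intervals have total length
`a + π/2`. In the remaining cases `F` is a translate of `tan`.
-/

open MeasureTheory ProbabilityTheory Real

/-- The uniform distribution on `(-π, π]`. -/
noncomputable def uniformIoc : Measure ℝ :=
  ENNReal.ofReal (2 * π)⁻¹ • volume.restrict (Set.Ioc (-π) π)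

open Set Filter Topology

theorem measurable_tan : Measurable tan := by
  rw [show tan = fun x => sin x / cos x from funext tan_eq_sin_div_cos]
  fun_prop

theorem continuousAt_tan_add {p v : ℝ} (hcos : cos (p + v) ≠ 0) :
    ContinuousAt (fun θ => tan (θ + v)) p :=
  ContinuousAt.comp (g := tan) (continuousAt_tan.2 hcos) (continuous_add_const v).continuousAt

theorem strictMonoOn_tan_add {v : ℝ} {s : Set ℝ} (hs : Convex ℝ s)
    (hcos : ∀ θ ∈ s, cos (θ + v) ≠ 0) : StrictMonoOn (fun θ => tan (θ + v)) s := by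
  have hderiv : ∀ θ ∈ s, HasDerivAt (fun θ => tan (θ + v)) (1 / cos (θ + v) ^ 2) θ :=
    fun θ hθ => (hasDerivAt_tan (hcos θ hθ)).comp_add_const θ v
  refine strictMonoOn_of_deriv_pos hs (fun θ hθ => (hderiv θ hθ).continuousAt.continuousWithinAt)
    fun θ hθ => ?_
  have hθ := interior_subset hθ
  rw [(hderiv θ hθ).deriv]
  have := hcos θ hθ
  positivity

theorem tendsto_tan_add_nhdsLT {p v : ℝ} (hcos : cos (p + v) = 0) :
    Tendsto (fun θ => tan (θ + v)) (𝓝[<] p) atTop := by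
  obtain ⟨k, hk⟩ := cos_eq_zero_iff.1 hcos
  have hshift : Tendsto (fun θ => θ + v - k * π) (𝓝[<] p) (𝓝[<] (π / 2)) := by
    refine tendsto_nhdsWithin_iff.2 ⟨tendsto_nhdsWithin_of_tendsto_nhds ?_, ?_⟩
    · exact (by fun_prop : Continuous fun θ : ℝ => θ + v - k * π).tendsto' p _ (by linarith)
    · filter_upwards [self_mem_nhdsWithin] with θ (hθ : θ < p)
      rw [mem_Iio]; linarith
  simpa only [Function.comp_def, tan_sub_int_mul_pi] using tendsto_tan_pi_div_two.comp hshift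

theorem tendsto_tan_add_nhdsGT {p v : ℝ} (hcos : cos (p + v) = 0) :
    Tendsto (fun θ => tan (θ + v)) (𝓝[>] p) atBot := by
  obtain ⟨k, hk⟩ := cos_eq_zero_iff.1 hcos
  have hshift : Tendsto (fun θ => θ + v - (k + 1 : ℤ) * π) (𝓝[>] p) (𝓝[>] (-(π / 2))) := by
    push_cast
    refine tendsto_nhdsWithin_iff.2 ⟨tendsto_nhdsWithin_of_tendsto_nhds ?_, ?_⟩
    · exact (by fun_prop : Continuous fun θ : ℝ => θ + v - (k + 1) * π).tendsto' p _ (by linarith)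
    · filter_upwards [self_mem_nhdsWithin] with θ (hθ : p < θ)
      rw [mem_Ioi]; linarith
  simpa only [Function.comp_def, tan_sub_int_mul_pi] using tendsto_tan_neg_pi_div_two.comp hshift

theorem exists_eq_and_volume_sublevel_inter_Ioo {f : ℝ → ℝ} {α β : ℝ} (hαβ : α < β)
    (hcont : ContinuousOn f (Ioo α β)) (hmono : StrictMonoOn f (Ioo α β))
    (hbot : Tendsto f (𝓝[>] α) atBot) (htop : Tendsto f (𝓝[<] β) atTop) (x : ℝ) :
    ∃ θ ∈ Ioo α β, f θ = x ∧ volume ({θ | f θ ≤ x} ∩ Ioo α β) = ENNReal.ofReal (θ - α) := by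
  obtain ⟨θ, hθ, rfl⟩ := hcont.surjOn_of_tendsto (nonempty_Ioo.2 hαβ)
    (by rwa [tendsto_comp_coe_Ioo_atBot hαβ]) (by rwa [tendsto_comp_coe_Ioo_atTop hαβ])
    (mem_univ x)
  refine ⟨θ, hθ, rfl, ?_⟩
  have hsub : {θ' | f θ' ≤ f θ} ∩ Ioo α β = Ioc α θ := by
    ext θ'
    constructor
    · rintro ⟨hle, hθ'⟩
      exact ⟨hθ'.1, (hmono.le_iff_le hθ' hθ).1 hle⟩
    · rintro ⟨hα, hle⟩
      have hθ' : θ' ∈ Ioo α β := ⟨hα, hle.trans_lt hθ.2⟩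
      exact ⟨(hmono.le_iff_le hθ' hθ).2 hle, hθ'⟩
  rw [hsub, Real.volume_Ioc]

theorem volume_inter_Ioc_eq_volume_inter_Ioo (S : Set ℝ) (a b : ℝ) :
    volume (S ∩ Ioc a b) = volume (S ∩ Ioo a b) :=
  measure_congr ((ae_eq_refl S).inter Ioo_ae_eq_Ioc.symm)

theorem volume_inter_Ioc_add_volume_inter_Ioc {S : Set ℝ} (hS : MeasurableSet S) {a m b : ℝ}
    (ham : a ≤ m) (hmb : m ≤ b) :
    volume (S ∩ Ioc a m) + volume (S ∩ Ioc m b) = volume (S ∩ Ioc a b) := by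
  rw [← Ioc_union_Ioc_eq_Ioc ham hmb, inter_union_distrib_left, measure_union
    ((Ioc_disjoint_Ioc_of_le le_rfl).mono inter_subset_right inter_subset_right)
    (hS.inter measurableSet_Ioc)]

theorem volume_inter_Ioc_eq_of_periodic {p : ℝ} (hp : 0 < p) {S : Set ℝ} (hS : MeasurableSet S)
    (hper : Function.Periodic (· ∈ S) p) (a b : ℝ) :
    volume (S ∩ Ioc a (a + p)) = volume (S ∩ Ioc b (b + p)) := by
  refine (isAddFundamentalDomain_Ioc hp a).measure_set_eq (isAddFundamentalDomain_Ioc hp b) hS ?_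
  rintro ⟨_, n, rfl⟩
  ext θ
  simpa [add_comm] using hper.int_mul n θ

theorem stdCauchyMeasure_Iic (x : ℝ) :
    stdCauchyMeasure (Iic x) = ENNReal.ofReal (π⁻¹ * (arctan x + π / 2)) := by
  rw [stdCauchyMeasure, withDensity_apply _ measurableSet_Iic]
  simp_rw [one_div, mul_inv]
  rw [← ofReal_integral_eq_lintegral_ofReal
      (integrable_inv_one_add_sq.const_mul π⁻¹).integrableOn (ae_of_all _ fun z => by positivity),
    integral_const_mul, integral_Iic_inv_one_add_sq]

theorem map_uniformIoc_eq_stdCauchyMeasure {f : ℝ → ℝ} (hf : Measurable f)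
    (hcdf : ∀ x, volume ({θ | f θ ≤ x} ∩ Ioc (-π) π) = ENNReal.ofReal (2 * arctan x + π)) :
    uniformIoc.map f = stdCauchyMeasure := by
  have : IsFiniteMeasure uniformIoc := ⟨by simp [uniformIoc, ENNReal.mul_lt_top]⟩
  refine Measure.ext_of_Iic _ _ fun x => ?_
  rw [Measure.map_apply hf measurableSet_Iic, uniformIoc, Measure.smul_apply,
    Measure.restrict_apply (hf measurableSet_Iic), smul_eq_mul, stdCauchyMeasure_Iic]
  change _ * volume ({θ | f θ ≤ x} ∩ _) = _
  rw [hcdf x, ← ENNReal.ofReal_mul (by positivity)]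
  have := neg_pi_div_two_lt_arctan x
  congr 1
  field_simp

noncomputable def tanConvexComb (w u θ : ℝ) : ℝ := w * tan θ + (1 - w) * tan (θ + u)

theorem tanConvexComb_periodic (w u : ℝ) : Function.Periodic (tanConvexComb w u) π := fun θ => by
  simp only [tanConvexComb, add_right_comm θ π u, tan_periodic θ, tan_periodic (θ + u)]

theorem tanConvexComb_add_int_mul_pi (w u : ℝ) (k : ℤ) :
    tanConvexComb w (u + k * π) = tanConvexComb w u := by
  ext θ
  simp only [tanConvexComb, ← add_assoc, tan_add_int_mul_pi]

theorem measurable_tanConvexComb (w u : ℝ) : Measurable (tanConvexComb w u) :=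
  (measurable_tan.const_mul w).add ((measurable_tan.comp (measurable_add_const u)).const_mul _)

theorem continuousOn_tanConvexComb {w u : ℝ} {s : Set ℝ} (hcos : ∀ θ ∈ s, cos θ ≠ 0)
    (hcos' : ∀ θ ∈ s, cos (θ + u) ≠ 0) : ContinuousOn (tanConvexComb w u) s := fun θ hθ =>
  (((continuousAt_tan.2 (hcos θ hθ)).const_mul w).add
    ((continuousAt_tan_add (hcos' θ hθ)).const_mul _)).continuousWithinAt

theorem strictMonoOn_tanConvexComb {w u : ℝ} (hw₀ : 0 < w) (hw₁ : w ≤ 1) {s : Set ℝ}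
    (hs : Convex ℝ s) (hcos : ∀ θ ∈ s, cos θ ≠ 0) (hcos' : ∀ θ ∈ s, cos (θ + u) ≠ 0) :
    StrictMonoOn (tanConvexComb w u) s := by
  have h₀ : StrictMonoOn tan s := by
    simpa only [add_zero] using strictMonoOn_tan_add (v := 0) hs (by simpa only [add_zero])
  have hshift := strictMonoOn_tan_add hs hcos'
  exact fun a ha b hb hab => add_lt_add_of_lt_of_le (mul_lt_mul_of_pos_left (h₀ ha hb hab) hw₀)
    (mul_le_mul_of_nonneg_left (hshift ha hb hab).le (sub_nonneg.2 hw₁))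

theorem tendsto_tanConvexComb_nhdsLT {w u p : ℝ} (hw₀ : 0 < w) (hw₁ : w < 1)
    (hp : Xor (cos p = 0) (cos (p + u) = 0)) :
    Tendsto (tanConvexComb w u) (𝓝[<] p) atTop := by
  rcases hp with ⟨hp, hpu⟩ | ⟨hpu, hp⟩
  · have h₀ : Tendsto tan (𝓝[<] p) atTop := by
      simpa only [add_zero] using tendsto_tan_add_nhdsLT (v := 0) (by rwa [add_zero])
    exact (h₀.const_mul_atTop hw₀).atTop_add
      (((continuousAt_tan_add hpu).tendsto.mono_left nhdsWithin_le_nhds).const_mul _)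
  · exact ((((continuousAt_tan.2 hp).tendsto.mono_left nhdsWithin_le_nhds).const_mul w).add_atTop
      ((tendsto_tan_add_nhdsLT hpu).const_mul_atTop (by linarith)))

theorem tendsto_tanConvexComb_nhdsGT {w u p : ℝ} (hw₀ : 0 < w) (hw₁ : w < 1)
    (hp : Xor (cos p = 0) (cos (p + u) = 0)) :
    Tendsto (tanConvexComb w u) (𝓝[>] p) atBot := by
  rcases hp with ⟨hp, hpu⟩ | ⟨hpu, hp⟩
  · have h₀ : Tendsto tan (𝓝[>] p) atBot := by
      simpa only [add_zero] using tendsto_tan_add_nhdsGT (v := 0) (by rwa [add_zero])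
    exact (h₀.const_mul_atBot hw₀).atBot_add
      (((continuousAt_tan_add hpu).tendsto.mono_left nhdsWithin_le_nhds).const_mul _)
  · exact ((((continuousAt_tan.2 hp).tendsto.mono_left nhdsWithin_le_nhds).const_mul w).add_atBot
      ((tendsto_tan_add_nhdsGT hpu).const_mul_atBot (by linarith)))

theorem exists_tanConvexComb_eq_and_volume_sublevel_inter_Ioo {w u α β : ℝ} (hw₀ : 0 < w)
    (hw₁ : w < 1) (hαβ : α < β) (hcos : ∀ θ ∈ Ioo α β, cos θ ≠ 0)
    (hcos' : ∀ θ ∈ Ioo α β, cos (θ + u) ≠ 0) (hα : Xor (cos α = 0) (cos (α + u) = 0))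
    (hβ : Xor (cos β = 0) (cos (β + u) = 0)) (x : ℝ) :
    ∃ θ ∈ Ioo α β, tanConvexComb w u θ = x ∧
      volume ({θ | tanConvexComb w u θ ≤ x} ∩ Ioo α β) = ENNReal.ofReal (θ - α) :=
  exists_eq_and_volume_sublevel_inter_Ioo hαβ (continuousOn_tanConvexComb hcos hcos')
    (strictMonoOn_tanConvexComb hw₀ hw₁.le (convex_Ioo α β) hcos hcos')
    (tendsto_tanConvexComb_nhdsGT hw₀ hw₁ hα) (tendsto_tanConvexComb_nhdsLT hw₀ hw₁ hβ) x

theorem sin_eq_of_tanConvexComb_eq_tan {w u θ a : ℝ} (hθ : cos θ ≠ 0) (hθu : cos (θ + u) ≠ 0)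
    (ha : cos a ≠ 0) (h : tanConvexComb w u θ = tan a) :
    sin (2 * θ + u - a) = sin a * cos u - (1 - 2 * w) * sin u * cos a := by
  obtain ⟨φ, rfl⟩ : ∃ φ, u = φ - θ := ⟨θ + u, by ring⟩
  rw [add_sub_cancel] at hθu
  rw [tanConvexComb, add_sub_cancel, tan_eq_sin_div_cos, tan_eq_sin_div_cos,
    tan_eq_sin_div_cos] at h
  rw [show 2 * θ + (φ - θ) - a = θ + φ - a by ring, sin_sub, sin_add, cos_add, sin_sub, cos_sub]
  field_simp at h
  linear_combination 2 * h

theorem add_eq_of_sin_eq {u a θ₁ θ₂ : ℝ} (ha : a ∈ Ioo (-(π / 2)) (π / 2))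
    (h₁ : θ₁ ∈ Ioo (π / 2 - u) (π / 2)) (h₂ : θ₂ ∈ Ioo (π / 2) (π / 2 - u + π))
    (h : sin (2 * θ₁ + u - a) = sin (2 * θ₂ + u - a)) : θ₁ + θ₂ = a + 3 * π / 2 - u := by
  obtain ⟨ha₁, ha₂⟩ := ha
  obtain ⟨h₁₁, h₁₂⟩ := h₁
  obtain ⟨h₂₁, h₂₂⟩ := h₂
  obtain ⟨k, hk | hk⟩ := sin_eq_sin_iff.1 h
  · have h0 : ((0 : ℤ) : ℝ) < k := lt_of_mul_lt_mul_right (by push_cast; linarith) pi_pos.le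
    have h1 : (k : ℝ) < ((1 : ℤ) : ℝ) := lt_of_mul_lt_mul_right (by push_cast; linarith) pi_pos.le
    norm_cast at h0 h1
    omega
  · have h0 : ((0 : ℤ) : ℝ) < k := lt_of_mul_lt_mul_right (by push_cast; linarith) pi_pos.le
    have h2 : (k : ℝ) < ((2 : ℤ) : ℝ) := lt_of_mul_lt_mul_right (by push_cast; linarith) pi_pos.le
    norm_cast at h0 h2
    obtain rfl : k = 1 := by omega
    push_cast at hk
    linarith

theorem volume_sublevel_tan_add_inter_Ioc (v x : ℝ) :
    volume ({θ | tan (θ + v) ≤ x} ∩ Ioc (-(π / 2) - v) (-(π / 2) - v + π)) =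
      ENNReal.ofReal (arctan x + π / 2) := by
  have hcos : ∀ θ ∈ Ioo (-(π / 2) - v) (-(π / 2) - v + π), cos (θ + v) ≠ 0 := fun θ hθ =>
    (cos_pos_of_mem_Ioo ⟨by linarith [hθ.1], by linarith [hθ.2]⟩).ne'
  obtain ⟨θ, hθ, hθx, hvol⟩ := exists_eq_and_volume_sublevel_inter_Ioo (by linarith [pi_pos])
    (fun θ hθ => (continuousAt_tan_add (hcos θ hθ)).continuousWithinAt)
    (strictMonoOn_tan_add (convex_Ioo _ _) hcos)
    (tendsto_tan_add_nhdsGT (by rw [sub_add_cancel, cos_neg, cos_pi_div_two]))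
    (tendsto_tan_add_nhdsLT (by rw [show -(π / 2) - v + π + v = π / 2 by ring, cos_pi_div_two]))
    x
  have harctan : arctan x = θ + v := by
    rw [← hθx, arctan_tan (by linarith [hθ.1]) (by linarith [hθ.2])]
  rw [volume_inter_Ioc_eq_volume_inter_Ioo, hvol, harctan]
  congr 1
  ring

theorem volume_sublevel_tanConvexComb_inter_Ioc {w u : ℝ} (hw₀ : 0 < w) (hw₁ : w < 1)
    (hu₀ : 0 < u) (hu : u < π) (x : ℝ) :
    volume ({θ | tanConvexComb w u θ ≤ x} ∩ Ioc (π / 2 - u) (π / 2 - u + π)) =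
      ENNReal.ofReal (arctan x + π / 2) := by
  have hsin : sin u ≠ 0 := (sin_pos_of_pos_of_lt_pi hu₀ hu).ne'
  have hc₁ : ∀ θ ∈ Ioo (π / 2 - u) (π / 2), cos θ ≠ 0 := fun θ hθ =>
    (cos_pos_of_mem_Ioo ⟨by linarith [hθ.1], hθ.2⟩).ne'
  have hc₁' : ∀ θ ∈ Ioo (π / 2 - u) (π / 2), cos (θ + u) ≠ 0 := fun θ hθ =>
    (cos_neg_of_pi_div_two_lt_of_lt (by linarith [hθ.1]) (by linarith [hθ.2])).ne
  have hc₂ : ∀ θ ∈ Ioo (π / 2) (π / 2 - u + π), cos θ ≠ 0 := fun θ hθ =>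
    (cos_neg_of_pi_div_two_lt_of_lt hθ.1 (by linarith [hθ.2])).ne
  have hc₂' : ∀ θ ∈ Ioo (π / 2) (π / 2 - u + π), cos (θ + u) ≠ 0 := fun θ hθ =>
    (cos_neg_of_pi_div_two_lt_of_lt (by linarith [hθ.1]) (by linarith [hθ.2])).ne
  have hpole₀ : Xor (cos (π / 2 - u) = 0) (cos (π / 2 - u + u) = 0) := by
    rw [cos_pi_div_two_sub, sub_add_cancel, cos_pi_div_two]; exact .inr ⟨rfl, hsin⟩
  have hpole₁ : Xor (cos (π / 2) = 0) (cos (π / 2 + u) = 0) := by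
    rw [cos_pi_div_two, add_comm, cos_add_pi_div_two]; exact .inl ⟨rfl, neg_ne_zero.2 hsin⟩
  have hpole₂ : Xor (cos (π / 2 - u + π) = 0) (cos (π / 2 - u + π + u) = 0) := by
    rw [cos_add_pi, cos_pi_div_two_sub, show π / 2 - u + π + u = π / 2 + π by ring, cos_add_pi,
      cos_pi_div_two, neg_zero]
    exact .inr ⟨rfl, neg_ne_zero.2 hsin⟩
  obtain ⟨θ₁, hθ₁, hθ₁x, hvol₁⟩ := exists_tanConvexComb_eq_and_volume_sublevel_inter_Ioo hw₀ hw₁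
    (by linarith) hc₁ hc₁' hpole₀ hpole₁ x
  obtain ⟨θ₂, hθ₂, hθ₂x, hvol₂⟩ := exists_tanConvexComb_eq_and_volume_sublevel_inter_Ioo hw₀ hw₁
    (by linarith) hc₂ hc₂' hpole₁ hpole₂ x
  have hcos_arctan := (cos_arctan_pos x).ne'
  have hsum : θ₁ + θ₂ = arctan x + 3 * π / 2 - u := by
    refine add_eq_of_sin_eq ⟨neg_pi_div_two_lt_arctan x, arctan_lt_pi_div_two x⟩ hθ₁ hθ₂ ?_
    rw [sin_eq_of_tanConvexComb_eq_tan (hc₁ θ₁ hθ₁) (hc₁' θ₁ hθ₁) hcos_arctan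
        (hθ₁x.trans (tan_arctan x).symm),
      sin_eq_of_tanConvexComb_eq_tan (hc₂ θ₂ hθ₂) (hc₂' θ₂ hθ₂) hcos_arctan
        (hθ₂x.trans (tan_arctan x).symm)]
  have hS : MeasurableSet {θ | tanConvexComb w u θ ≤ x} :=
    measurableSet_le (measurable_tanConvexComb w u) measurable_const
  rw [← volume_inter_Ioc_add_volume_inter_Ioc hS (by linarith : π / 2 - u ≤ π / 2) (by linarith),
    volume_inter_Ioc_eq_volume_inter_Ioo, volume_inter_Ioc_eq_volume_inter_Ioo, hvol₁, hvol₂,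
    ← ENNReal.ofReal_add (by linarith [hθ₁.1]) (by linarith [hθ₂.1])]
  congr 1
  linarith

theorem exists_volume_sublevel_tanConvexComb_inter_Ioc {w : ℝ} (hw : w ∈ Icc 0 1) (u x : ℝ) :
    ∃ c, volume ({θ | tanConvexComb w u θ ≤ x} ∩ Ioc c (c + π)) =
      ENNReal.ofReal (arctan x + π / 2) := by
  rw [← toIcoMod_add_toIcoDiv_zsmul pi_pos 0 u, zsmul_eq_mul, tanConvexComb_add_int_mul_pi]
  obtain ⟨hu₀, hu⟩ := toIcoMod_mem_Ico pi_pos 0 u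
  generalize toIcoMod pi_pos 0 u = u at hu₀ hu
  have of_eq_tan_add (v : ℝ) (hv : tanConvexComb w u = fun θ => tan (θ + v)) :
      ∃ c, volume ({θ | tanConvexComb w u θ ≤ x} ∩ Ioc c (c + π)) =
        ENNReal.ofReal (arctan x + π / 2) :=
    ⟨_, by rw [hv]; exact volume_sublevel_tan_add_inter_Ioc v x⟩
  rcases hw.1.eq_or_lt with rfl | hw₀
  · exact of_eq_tan_add u (by ext θ; simp [tanConvexComb])
  rcases hw.2.eq_or_lt with rfl | hw₁
  · exact of_eq_tan_add 0 (by ext θ; simp [tanConvexComb])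
  rcases hu₀.eq_or_lt with rfl | hu₀
  · exact of_eq_tan_add 0 (by ext θ; simp only [tanConvexComb, add_zero]; ring)
  exact ⟨_, volume_sublevel_tanConvexComb_inter_Ioc hw₀ hw₁ hu₀ (by linarith) x⟩

theorem volume_sublevel_tanConvexComb_inter_Ioc_neg_pi_pi {w : ℝ} (hw : w ∈ Icc 0 1) (u x : ℝ) :
    volume ({θ | tanConvexComb w u θ ≤ x} ∩ Ioc (-π) π) = ENNReal.ofReal (2 * arctan x + π) := by
  set S := {θ | tanConvexComb w u θ ≤ x}
  obtain ⟨c, hc⟩ := exists_volume_sublevel_tanConvexComb_inter_Ioc hw u x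
  have hS : MeasurableSet S := measurableSet_le (measurable_tanConvexComb w u) measurable_const
  have hper : Function.Periodic (· ∈ S) π := fun θ =>
    congrArg (· ≤ x) (tanConvexComb_periodic w u θ)
  have hhalf (b : ℝ) : volume (S ∩ Ioc b (b + π)) = ENNReal.ofReal (arctan x + π / 2) :=
    (volume_inter_Ioc_eq_of_periodic pi_pos hS hper b c).trans hc
  have hleft := hhalf (-π)
  have hright := hhalf 0
  rw [neg_add_cancel] at hleft
  rw [zero_add] at hright
  have := neg_pi_div_two_lt_arctan x
  rw [← volume_inter_Ioc_add_volume_inter_Ioc hS (by linarith [pi_pos] : -π ≤ 0) pi_pos.le,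
    hleft, hright, ← ENNReal.ofReal_add (by linarith) (by linarith)]
  congr 1
  ring

theorem convex_comb_two_tan_cauchy_general {Ω : Type*} [MeasurableSpace Ω] (μ : Measure Ω)
    (Θ : Ω → ℝ) (hΘ : Measurable Θ)
    (hlaw : μ.map Θ = uniformIoc) (u : ℝ) (w : ℝ) (hw : w ∈ Set.Icc (0 : ℝ) 1) :
    μ.map (fun ω => w * Real.tan (Θ ω) + (1 - w) * Real.tan (Θ ω + u)) = stdCauchyMeasure := by
  change μ.map (tanConvexComb w u ∘ Θ) = _
  rw [← Measure.map_map (measurable_tanConvexComb w u) hΘ, hlaw]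
  exact map_uniformIoc_eq_stdCauchyMeasure (measurable_tanConvexComb w u)
    (volume_sublevel_tanConvexComb_inter_Ioc_neg_pi_pi hw u)

theorem convex_comb_two_tan_cauchy {Ω : Type*} [MeasurableSpace Ω] (μ : Measure Ω)
    [IsProbabilityMeasure μ] (Θ : Ω → ℝ) (hΘ : Measurable Θ)
    (hlaw : μ.map Θ = uniformIoc) (u : ℝ) (w : ℝ) (hw : w ∈ Set.Icc (0 : ℝ) 1) :
    μ.map (fun ω => w * Real.tan (Θ ω) + (1 - w) * Real.tan (Θ ω + u)) = stdCauchyMeasure :=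
  convex_comb_two_tan_cauchy_general μ Θ hΘ hlaw u w hw
end
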